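/- arXiv:2303.16508 — 4 statements merged into one kernel-verified Lean document; each statement's English description precedes it below -/
import Mathlib

section
/- Let $U, V$ be Hilbert spaces, $B' \in \mathcal{L}(V,U)$ boundedly invertible, and equip $V$ with the inner product $\langle v, w\rangle_{V,\mathrm{opt}} := \langle B'v, B'w\rangle_U$. Let $U^\delta \subseteq U$ and $V^\delta \subseteq V$ be closed subspaces, let $P^\delta$ be the $\langle\cdot,\cdot\rangle_{V,\mathrm{opt}}$-orthogonal projector onto $V^\delta$, and define $\gamma^\delta := \inf_{0\neq u \in U^\delta} \sup_{0 \neq v \in V^\delta} \frac{|\langle u, B'v\rangle_U|}{\|u\|_U \|B'v\|_U}$. Then $\sup_{0 \neq u \in U^\delta} \frac{\inf_{v \in V^\delta} \|B'[(B')^{-1}u - v]\|_U^2}{\|u\|_U^2} = 1 - (\gamma^\delta)^2$. -/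
open scoped InnerProductSpace

/-!
Applying `B'` turns the optimal test norm into the norm of `U`, so everything reduces to the
orthogonal projector `P` onto `W = B' Vδ`. By Pythagoras the best approximation error of `u` is
`‖u‖² - ‖P u‖²`, and by Cauchy–Schwarz the inner supremum of the inf-sup quotient is `‖P u‖ / ‖u‖`,
attained at `P u`. Since `t ↦ 1 - t²` is decreasing on `t ≥ 0`, the supremum over `u` of the first
quantity is `1 - γδ²`.
-/

theorem Real.ciInf_pow_two {ι : Sort*} [Nonempty ι] {g : ι → ℝ} (hg : ∀ i, 0 ≤ g i) :
    (⨅ i, g i) ^ 2 = ⨅ i, g i ^ 2 := by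
  -- a monotone extension of squaring on `[0, ∞)`
  have hmono : Monotone fun t : ℝ => max t 0 ^ 2 := fun a b hab =>
    pow_le_pow_left₀ (le_max_right _ _) (max_le_max_right 0 hab) 2
  have key := hmono.map_ciInf_of_continuousAt (by fun_prop) ⟨0, by rintro _ ⟨i, rfl⟩; exact hg i⟩
  simpa only [max_eq_left (le_ciInf hg), max_eq_left (hg _)] using key

theorem Real.iSup_one_sub_pow_two {ι : Sort*} [Nonempty ι] {g : ι → ℝ} (hg : ∀ i, 0 ≤ g i) :
    ⨆ i, (1 - g i ^ 2) = 1 - (⨅ i, g i) ^ 2 := by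
  have hanti : Antitone fun t : ℝ => 1 - t := fun _ _ hab => sub_le_sub_left hab 1
  rw [Real.ciInf_pow_two hg]
  exact (hanti.map_ciInf_of_continuousAt (by fun_prop) ⟨0, by rintro _ ⟨i, rfl⟩; positivity⟩).symm

namespace Submodule

variable {𝕜 E : Type*} [RCLike 𝕜] [NormedAddCommGroup E] [InnerProductSpace 𝕜 E]
  (K : Submodule 𝕜 E) [K.HasOrthogonalProjection]

theorem norm_inner_div_norm_le_norm_starProjection (x : E) {w : E} (hw : w ∈ K) :
    ‖⟪x, w⟫_𝕜‖ / ‖w‖ ≤ ‖K.starProjection x‖ := by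
  have hinner : ⟪x, w⟫_𝕜 = ⟪K.starProjection x, w⟫_𝕜 := by
    rw [inner_starProjection_left_eq_right, starProjection_eq_self_iff.mpr hw]
  exact div_le_of_le_mul₀ (norm_nonneg _) (norm_nonneg _) (hinner ▸ norm_inner_le_norm _ _)

theorem norm_starProjection_sq_le_norm_inner (x : E) :
    ‖K.starProjection x‖ ^ 2 ≤ ‖⟪x, K.starProjection x⟫_𝕜‖ := by
  rw [norm_inner_symm]
  exact (K.re_inner_starProjection_eq_normSq x).symm.trans_le (RCLike.re_le_norm _)

theorem iSup_norm_inner_div_norm (x : E) :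
    ⨆ w : {w : K // (w : E) ≠ 0}, ‖⟪x, w⟫_𝕜‖ / ‖(w : E)‖ = ‖K.starProjection x‖ := by
  have hle (w : {w : K // (w : E) ≠ 0}) : ‖⟪x, w⟫_𝕜‖ / ‖(w : E)‖ ≤ ‖K.starProjection x‖ :=
    K.norm_inner_div_norm_le_norm_starProjection x w.1.2
  refine le_antisymm (Real.iSup_le hle (norm_nonneg _)) ?_
  by_cases hP : K.starProjection x = 0
  · rw [hP, norm_zero]
    exact Real.iSup_nonneg fun _ => by positivity
  · refine le_ciSup_of_le ⟨_, Set.forall_mem_range.2 hle⟩ ⟨⟨_, K.starProjection_apply_mem x⟩, hP⟩ ?_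
    rw [le_div_iff₀ (norm_pos_iff.mpr hP), ← sq]
    exact K.norm_starProjection_sq_le_norm_inner x

theorem iSup_norm_inner_div_norm_mul_norm (x : E) :
    ⨆ w : {w : K // (w : E) ≠ 0}, ‖⟪x, w⟫_𝕜‖ / (‖x‖ * ‖(w : E)‖) = ‖K.starProjection x‖ / ‖x‖ := by
  simp_rw [div_mul_eq_div_div_swap, div_eq_mul_inv _ ‖x‖]
  rw [← Real.iSup_mul_of_nonneg (inv_nonneg.mpr (norm_nonneg x)), K.iSup_norm_inner_div_norm]

theorem iInf_norm_sub_sq (x : E) :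
    ⨅ w : K, ‖x - w‖ ^ 2 = ‖x‖ ^ 2 - ‖K.starProjection x‖ ^ 2 := by
  rw [← Real.ciInf_pow_two fun _ => norm_nonneg _, ← starProjection_minimal,
    K.norm_sq_eq_add_norm_sq_starProjection x, starProjection_orthogonal_val]
  ring

end Submodule

theorem infsup_approximation_identity_general
    {U V : Type*}
    [NormedAddCommGroup U] [InnerProductSpace ℂ U] [CompleteSpace U]
    [NormedAddCommGroup V] [InnerProductSpace ℂ V] [CompleteSpace V]
    (B' : V ≃L[ℂ] U)
    (Uδ : Submodule ℂ U) (Vδ : Submodule ℂ V)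
    (hUδ : Uδ ≠ ⊥)
    (hVc : IsClosed (Vδ : Set V)) :
    (⨆ u : {u : Uδ // (u : U) ≠ 0},
        (⨅ v : Vδ, ‖B' (B'.symm ((u : Uδ) : U) - (v : V))‖ ^ 2) / ‖((u : Uδ) : U)‖ ^ 2)
      = 1 - (⨅ u : {u : Uδ // (u : U) ≠ 0}, ⨆ v : {v : Vδ // (v : V) ≠ 0},
          ‖(⟪((u : Uδ) : U), B' ((v : Vδ) : V)⟫_ℂ : ℂ)‖
            / (‖((u : Uδ) : U)‖ * ‖B' ((v : Vδ) : V)‖)) ^ 2 := by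
  set W := Vδ.map (B'.toLinearEquiv : V →ₗ[ℂ] U)
  have : CompleteSpace W := (B'.isClosed_image.mpr hVc).completeSpace_coe
  let e : Vδ ≃ W := (B'.toLinearEquiv.submoduleMap Vδ).toEquiv
  have hdist (x : U) :
      ⨅ v : Vδ, ‖B' (B'.symm x - v)‖ ^ 2 = ‖x‖ ^ 2 - ‖W.starProjection x‖ ^ 2 := by
    rw [← W.iInf_norm_sub_sq, ← e.iInf_comp]
    simp [e]
  have hcos (x : U) :
      ⨆ v : {v : Vδ // (v : V) ≠ 0}, ‖⟪x, B' v⟫_ℂ‖ / (‖x‖ * ‖B' v‖)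
        = ‖W.starProjection x‖ / ‖x‖ := by
    let e₀ : {v : Vδ // (v : V) ≠ 0} ≃ {w : W // (w : U) ≠ 0} :=
      e.subtypeEquiv fun v => by simp [e]
    rw [← W.iSup_norm_inner_div_norm_mul_norm, ← e₀.iSup_comp]
    simp [e₀, e]
  obtain ⟨u₀, hu₀, hu₀_ne⟩ := (Submodule.ne_bot_iff _).mp hUδ
  have : Nonempty {u : Uδ // (u : U) ≠ 0} := ⟨⟨⟨u₀, hu₀⟩, hu₀_ne⟩⟩
  have hratio (u : {u : Uδ // (u : U) ≠ 0}) :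
      (‖(u : U)‖ ^ 2 - ‖W.starProjection u‖ ^ 2) / ‖(u : U)‖ ^ 2
        = 1 - (‖W.starProjection u‖ / ‖(u : U)‖) ^ 2 := by
    have : ‖(u : U)‖ ≠ 0 := norm_ne_zero_iff.mpr u.2
    field_simp
  simp_rw [hdist, hcos, hratio]
  exact Real.iSup_one_sub_pow_two fun _ => by positivity

/-- With the optimal-test inner product `⟪v,w⟫_{V,opt} = ⟪B'v, B'w⟫_U` on `V`,
closed subspaces `Uδ ⊆ U` (nonzero) and `Vδ ⊆ V`, and
`γδ = inf_{0≠u∈Uδ} sup_{0≠v∈Vδ} |⟪u, B'v⟫|/(‖u‖‖B'v‖)`, one has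
`sup_{0≠u∈Uδ} (inf_{v∈Vδ} ‖B'[(B')⁻¹u - v]‖²)/‖u‖² = 1 - γδ²`. -/
theorem infsup_approximation_identity
    {U V : Type*}
    [NormedAddCommGroup U] [InnerProductSpace ℂ U] [CompleteSpace U]
    [NormedAddCommGroup V] [InnerProductSpace ℂ V] [CompleteSpace V]
    (B' : V ≃L[ℂ] U)
    (Uδ : Submodule ℂ U) (Vδ : Submodule ℂ V)
    (hUδ : Uδ ≠ ⊥)
    (hUc : IsClosed (Uδ : Set U)) (hVc : IsClosed (Vδ : Set V)) :
    (⨆ u : {u : Uδ // (u : U) ≠ 0},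
        (⨅ v : Vδ, ‖B' (B'.symm ((u : Uδ) : U) - (v : V))‖ ^ 2) / ‖((u : Uδ) : U)‖ ^ 2)
      = 1 - (⨅ u : {u : Uδ // (u : U) ≠ 0}, ⨆ v : {v : Vδ // (v : V) ≠ 0},
          ‖(⟪((u : Uδ) : U), B' ((v : Vδ) : V)⟫_ℂ : ℂ)‖
            / (‖((u : Uδ) : U)‖ * ‖B' ((v : Vδ) : V)‖)) ^ 2 :=
  infsup_approximation_identity_general B' Uδ Vδ hUδ hVc
end

section
/- Let $U, V$ be Hilbert spaces, $B' \in \mathcal{L}(V,U)$ boundedly invertible with the optimal test inner product $\langle v,w\rangle_{V,\mathrm{opt}} = \langle B'v,B'w\rangle_U$ on $V$, and let $U^\delta \subseteq U$, $V^\delta \subseteq V$ be finite-dimensional subspaces such that $\gamma^\delta := \inf_{0\neq u^\delta \in U^\delta}\sup_{0\neq v^\delta \in V^\delta} \frac{|\langle u^\delta, B'v^\delta\rangle_U|}{\|u^\delta\|_U\|B'v^\delta\|_U} > 0$. For $u \in U$ with $q := Bu \in V'$, let $(v^\delta, u^\delta) \in V^\delta \times U^\delta$ solve the saddle point problem: $\langle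 B'v^\delta, B'\tilde v^\delta\rangle_U + \langle u^\delta, B'\tilde v^\delta\rangle_U = \langle u, B'\tilde v^\delta\rangle_U$ for all $\tilde v^\delta \in V^\delta$, and $\langle B'v^\delta, \tilde u^\delta\rangle_U = 0$ for all $\tilde u^\delta \in U^\delta$. Then for every $u \in U$, $\|u - u^\delta\|_U \leq \frac{1}{\gamma^\delta} \inf_{\tilde u^\delta \in U^\delta} \|u - \tilde u^\delta\|_U$. -/
open scoped InnerProductSpace

/-!
Let `P` be the orthogonal projection onto `B' Vδ`. The saddle point equations say
`P (u - uδ) = B' vδ ⟂ Uδ`, i.e. `⟪u - uδ, P z⟫ = 0` for `z ∈ Uδ`, and the inf-sup condition says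
`γδ ‖z‖ ≤ ‖P z‖` on `Uδ`. For `w ∈ Uδ` write `u - w = e + z` with `e = u - uδ`, `z = uδ - w ∈ Uδ`.
Then `⟪e, z⟫ = ⟪e, z - P z⟫` and `‖z - P z‖² ≤ (1 - γδ²) ‖z‖²`, so with `s = √(1 - γδ²)`,
`‖e + z‖² ≥ ‖e‖² - 2 s ‖e‖ ‖z‖ + ‖z‖² = (s ‖e‖ - ‖z‖)² + γδ² ‖e‖² ≥ γδ² ‖e‖²`.
-/

theorem sq_mul_sq_le_of_sq_le_one_sub_sq {γ a b c : ℝ} (hγ0 : 0 ≤ γ) (hγ1 : γ ≤ 1)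
    (ha : 0 ≤ a) (hb : 0 ≤ b) (hc : 0 ≤ c) (h : c ^ 2 ≤ (1 - γ ^ 2) * b ^ 2) :
    γ ^ 2 * a ^ 2 ≤ a ^ 2 - 2 * (a * c) + b ^ 2 := by
  obtain ⟨s, hs0, hs⟩ : ∃ s, 0 ≤ s ∧ s ^ 2 = 1 - γ ^ 2 :=
    ⟨√(1 - γ ^ 2), Real.sqrt_nonneg _, Real.sq_sqrt (by nlinarith)⟩
  have hcs : c ≤ s * b := pow_le_pow_iff_left₀ hc (by positivity) two_ne_zero |>.mp
    (by rwa [mul_pow, hs])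
  nlinarith [sq_nonneg (s * a - b), mul_le_mul_of_nonneg_left hcs ha]

namespace Submodule

variable {𝕜 E : Type*} [RCLike 𝕜] [NormedAddCommGroup E] [InnerProductSpace 𝕜 E]
  (K : Submodule 𝕜 E) [K.HasOrthogonalProjection]

theorem norm_sub_starProjection_sq (x : E) :
    ‖x - K.starProjection x‖ ^ 2 = ‖x‖ ^ 2 - ‖K.starProjection x‖ ^ 2 := by
  have := K.norm_sq_eq_add_norm_sq_starProjection x
  rw [starProjection_orthogonal', _root_.sub_apply, one_apply_eq_self] at this
  linarith

theorem norm_inner_le_norm_starProjection_mul_norm (x : E) {y : E} (hy : y ∈ K) :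
    ‖⟪x, y⟫_𝕜‖ ≤ ‖K.starProjection x‖ * ‖y‖ :=
  calc ‖⟪x, y⟫_𝕜‖ = ‖⟪K.starProjection x, y⟫_𝕜‖ := by
        rw [inner_starProjection_left_eq_right, K.starProjection_eq_self_iff.mpr hy]
    _ ≤ _ := norm_inner_le_norm _ _

theorem mul_norm_le_norm_add_of_inner_starProjection_eq_zero {X : Submodule 𝕜 E} {γ : ℝ}
    (hγ0 : 0 ≤ γ) (hγ1 : γ ≤ 1) (hX : ∀ z ∈ X, γ * ‖z‖ ≤ ‖K.starProjection z‖)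
    {e : E} (he : ∀ z ∈ X, ⟪e, K.starProjection z⟫_𝕜 = 0) {z : E} (hz : z ∈ X) :
    γ * ‖e‖ ≤ ‖e + z‖ := by
  have hinner : ⟪e, z⟫_𝕜 = ⟪e, z - K.starProjection z⟫_𝕜 := by
    rw [inner_sub_right, he z hz, sub_zero]
  have hre : -(‖e‖ * ‖z - K.starProjection z‖) ≤ RCLike.re ⟪e, z⟫_𝕜 := by
    rw [hinner]
    exact neg_le_of_abs_le <| (RCLike.abs_re_le_norm _).trans (norm_inner_le_norm _ _)
  have hdefect : ‖z - K.starProjection z‖ ^ 2 ≤ (1 - γ ^ 2) * ‖z‖ ^ 2 := by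
    rw [K.norm_sub_starProjection_sq]
    nlinarith [pow_le_pow_left₀ (by positivity) (hX z hz) 2]
  have hsq : (γ * ‖e‖) ^ 2 ≤ ‖e + z‖ ^ 2 := by
    rw [@norm_add_sq 𝕜]
    nlinarith [sq_mul_sq_le_of_sq_le_one_sub_sq hγ0 hγ1 (norm_nonneg e) (norm_nonneg z)
      (norm_nonneg _) hdefect]
  exact (abs_le_of_sq_le_sq hsq (norm_nonneg _)).trans' (le_abs_self _)

end Submodule

section InfSup

variable {𝕜 U V : Type*} [RCLike 𝕜] [NormedAddCommGroup U] [InnerProductSpace 𝕜 U]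
  [AddCommGroup V] [Module 𝕜 V]

noncomputable def discreteInfSupConstant (B' : V → U) (Uδ : Submodule 𝕜 U)
    (Vδ : Submodule 𝕜 V) : ℝ :=
  ⨅ u : {u : Uδ // (u : U) ≠ 0}, ⨆ v : {v : Vδ // (v : V) ≠ 0},
    ‖⟪((u : Uδ) : U), B' ((v : Vδ) : V)⟫_𝕜‖ / (‖((u : Uδ) : U)‖ * ‖B' ((v : Vδ) : V)‖)

variable (B' : V → U) (Uδ : Submodule 𝕜 U) (Vδ : Submodule 𝕜 V)

theorem discreteInfSupConstant_le_of_forall_le {z : U} (hz : z ∈ Uδ) (hz0 : z ≠ 0) {c : ℝ}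
    (hc : 0 ≤ c) (h : ∀ v ∈ Vδ, ‖⟪z, B' v⟫_𝕜‖ / (‖z‖ * ‖B' v‖) ≤ c) :
    discreteInfSupConstant B' Uδ Vδ ≤ c :=
  ciInf_le_of_le ⟨0, Set.forall_mem_range.2 fun _ => Real.iSup_nonneg fun _ => by positivity⟩
    ⟨⟨z, hz⟩, hz0⟩ (Real.iSup_le (fun v => h v v.1.2) hc)

theorem discreteInfSupConstant_le_one : discreteInfSupConstant B' Uδ Vδ ≤ 1 := by
  rcases isEmpty_or_nonempty {u : Uδ // (u : U) ≠ 0} with hU | ⟨⟨⟨z, hz⟩, hz0⟩⟩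
  · simp [discreteInfSupConstant]
  · exact discreteInfSupConstant_le_of_forall_le B' Uδ Vδ hz hz0 zero_le_one fun v _ =>
      div_le_one_of_le₀ (norm_inner_le_norm _ _) (by positivity)

theorem discreteInfSupConstant_mul_norm_le_norm_starProjection (K : Submodule 𝕜 U)
    [K.HasOrthogonalProjection] (hK : ∀ v ∈ Vδ, B' v ∈ K) :
    ∀ z ∈ Uδ, discreteInfSupConstant B' Uδ Vδ * ‖z‖ ≤ ‖K.starProjection z‖ := by
  intro z hz
  rcases eq_or_ne z 0 with rfl | hz0
  · simp
  have hzpos : 0 < ‖z‖ := norm_pos_iff.mpr hz0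
  rw [← le_div_iff₀ hzpos]
  refine discreteInfSupConstant_le_of_forall_le B' Uδ Vδ hz hz0 (by positivity) fun v hv => ?_
  refine div_le_of_le_mul₀ (by positivity) (by positivity) ?_
  calc ‖⟪z, B' v⟫_𝕜‖ ≤ ‖K.starProjection z‖ * ‖B' v‖ :=
        K.norm_inner_le_norm_starProjection_mul_norm z (hK v hv)
    _ = ‖K.starProjection z‖ / ‖z‖ * (‖z‖ * ‖B' v‖) := by field_simp

end InfSup

theorem practical_FOSLS_quasi_optimality_general
    {U V : Type*}
    [NormedAddCommGroup U] [InnerProductSpace ℂ U]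
    [NormedAddCommGroup V] [InnerProductSpace ℂ V]
    (B' : V ≃L[ℂ] U)
    (Uδ : Submodule ℂ U) (Vδ : Submodule ℂ V)
    [FiniteDimensional ℂ Vδ]
    (γδ : ℝ)
    (hγdef : γδ = ⨅ u : {u : Uδ // (u : U) ≠ 0}, ⨆ v : {v : Vδ // (v : V) ≠ 0},
        ‖(⟪((u : Uδ) : U), B' ((v : Vδ) : V)⟫_ℂ : ℂ)‖
          / (‖((u : Uδ) : U)‖ * ‖B' ((v : Vδ) : V)‖))
    (hγpos : 0 < γδ)
    (u : U) (vδ : V) (uδ : U) (hvδ : vδ ∈ Vδ) (huδ : uδ ∈ Uδ)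
    (hsaddle1 : ∀ w ∈ Vδ, ⟪B' vδ, B' w⟫_ℂ + ⟪uδ, B' w⟫_ℂ = ⟪u, B' w⟫_ℂ)
    (hsaddle2 : ∀ z ∈ Uδ, (⟪B' vδ, z⟫_ℂ : ℂ) = 0) :
    ‖u - uδ‖ ≤ (1 / γδ) * ⨅ w : Uδ, ‖u - (w : U)‖ := by
  change γδ = discreteInfSupConstant B' Uδ Vδ at hγdef
  set K : Submodule ℂ U := Vδ.map (B' : V →ₗ[ℂ] U)
  have hK : ∀ v ∈ Vδ, B' v ∈ K := fun v hv => Submodule.mem_map_of_mem hv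
  have hproj : K.starProjection (u - uδ) = B' vδ := by
    refine Submodule.eq_starProjection_of_mem_of_inner_eq_zero (hK vδ hvδ) ?_
    rintro _ ⟨w, hw, rfl⟩
    change ⟪u - uδ - B' vδ, B' w⟫_ℂ = 0
    rw [inner_sub_left, inner_sub_left, ← hsaddle1 w hw]
    ring
  have horth : ∀ z ∈ Uδ, ⟪u - uδ, K.starProjection z⟫_ℂ = 0 := fun z hz => by
    rw [← Submodule.inner_starProjection_left_eq_right, hproj, hsaddle2 z hz]
  have hbest : γδ * ‖u - uδ‖ ≤ ⨅ w : Uδ, ‖u - w‖ := le_ciInf fun w => by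
    simpa using K.mul_norm_le_norm_add_of_inner_starProjection_eq_zero hγpos.le
      (hγdef ▸ discreteInfSupConstant_le_one _ _ _)
      (hγdef ▸ discreteInfSupConstant_mul_norm_le_norm_starProjection _ _ _ K hK) horth
      (Uδ.sub_mem huδ w.2)
  rwa [one_div_mul_eq_div, le_div_iff₀' hγpos]

/-- quasi-optimality of the practical ultra-weak FOSLS method. If `(vδ, uδ)`
solves the discrete saddle point problem with data `q = Bu`, and the discrete inf-sup
constant `γδ` is positive, then `‖u - uδ‖ ≤ (1/γδ)·inf_{ũ∈Uδ} ‖u - ũ‖`. -/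
theorem practical_FOSLS_quasi_optimality
    {U V : Type*}
    [NormedAddCommGroup U] [InnerProductSpace ℂ U] [CompleteSpace U]
    [NormedAddCommGroup V] [InnerProductSpace ℂ V] [CompleteSpace V]
    (B' : V ≃L[ℂ] U)
    (Uδ : Submodule ℂ U) (Vδ : Submodule ℂ V)
    [FiniteDimensional ℂ Uδ] [FiniteDimensional ℂ Vδ]
    (γδ : ℝ)
    (hγdef : γδ = ⨅ u : {u : Uδ // (u : U) ≠ 0}, ⨆ v : {v : Vδ // (v : V) ≠ 0},
        ‖(⟪((u : Uδ) : U), B' ((v : Vδ) : V)⟫_ℂ : ℂ)‖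
          / (‖((u : Uδ) : U)‖ * ‖B' ((v : Vδ) : V)‖))
    (hγpos : 0 < γδ)
    (u : U) (vδ : V) (uδ : U) (hvδ : vδ ∈ Vδ) (huδ : uδ ∈ Uδ)
    (hsaddle1 : ∀ w ∈ Vδ, ⟪B' vδ, B' w⟫_ℂ + ⟪uδ, B' w⟫_ℂ = ⟪u, B' w⟫_ℂ)
    (hsaddle2 : ∀ z ∈ Uδ, (⟪B' vδ, z⟫_ℂ : ℂ) = 0) :
    ‖u - uδ‖ ≤ (1 / γδ) * ⨅ w : Uδ, ‖u - (w : U)‖ :=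
  practical_FOSLS_quasi_optimality_general B' Uδ Vδ γδ hγdef hγpos u vδ uδ hvδ huδ hsaddle1 hsaddle2
end

section
/- If for some constant $0 \leq \lambda < 1$ the boosted approximation satisfies $\|u - (u^\delta + B'v^\delta)\|_U \leq \lambda \|u - u^\delta\|_U$, then the computable quantity $\|B'v^\delta\|_U$ is an equivalent a posteriori error estimator: $\|B'v^\delta\|_U \leq \|u - u^\delta\|_U \leq \frac{1}{\sqrt{1-\lambda^2}}\|B'v^\delta\|_U$. -/
/-- a posteriori error estimator equivalence. If the boosted approximation
satisfies the Pythagorean identity and `‖u - (uδ + B'vδ)‖ ≤ λ ‖u - uδ‖` with `0 ≤ λ < 1`,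
then `‖B'vδ‖ ≤ ‖u - uδ‖ ≤ (1-λ²)^{-1/2} ‖B'vδ‖`. -/
theorem aposteriori_estimator_equivalence
    {U : Type*} [NormedAddCommGroup U] [InnerProductSpace ℂ U]
    (u uδ bv : U) (lam : ℝ) (hlam0 : 0 ≤ lam) (hlam1 : lam < 1)
    (hpyth : ‖u - (uδ + bv)‖ ^ 2 = ‖u - uδ‖ ^ 2 - ‖bv‖ ^ 2)
    (hlam : ‖u - (uδ + bv)‖ ≤ lam * ‖u - uδ‖) :
    ‖bv‖ ≤ ‖u - uδ‖ ∧ ‖u - uδ‖ ≤ (1 / Real.sqrt (1 - lam ^ 2)) * ‖bv‖ := by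
  have hb := norm_nonneg bv
  have he := norm_nonneg (u - uδ)
  have hr := norm_nonneg (u - (uδ + bv))
  have h1 : ‖bv‖ ≤ ‖u - uδ‖ := by nlinarith
  refine ⟨h1, ?_⟩
  have hs : 0 < 1 - lam ^ 2 := by nlinarith
  have hsq : Real.sqrt (1 - lam ^ 2) ^ 2 = 1 - lam ^ 2 := Real.sq_sqrt hs.le
  have hspos : 0 < Real.sqrt (1 - lam ^ 2) := Real.sqrt_pos.mpr hs
  have h2 : Real.sqrt (1 - lam ^ 2) * ‖u - uδ‖ ≤ ‖bv‖ := by nlinarith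
  rw [div_mul_eq_mul_div, le_div_iff₀ hspos, one_mul]
  linarith [h2]
end

section
/- Let $K$ be a $d$-simplex, $b_K$ its bubble function, and $p \in \mathbb{N}_0$. Then $\inf_{0 \neq \phi \in P_p(K)} \sup_{0 \neq \eta \in P_{p+d+1}(K) \cap H^1_0(K)} \frac{\Re\langle \phi, \eta\rangle_{L_2(K)}}{\|\phi\|_{L_2(K)} \|\eta\|_{L_2(K)}} \geq c > 0$, with $c$ depending only on $p$ and $d$ but not on $K$. -/
/-
Take `η = b_K φ`. Then `Re ⟨φ, η⟩ = ∫_K b_K |φ|²` and, since `0 ≤ b_K ≤ 1` on `K`,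
`‖η‖² = ∫_K b_K² |φ|² ≤ ∫_K b_K |φ|²`; so everything reduces to `∫_K |φ|² ≤ C ∫_K b_K |φ|²`
on `P_p` with `C` independent of `K`. On one fixed simplex this is equivalence of norms on the
finite-dimensional space `P_p`, because `b_K > 0` off the null set `∂K`. The affine map between
two simplices scales both sides by the same Jacobian, preserves `P_p` and carries bubble to
bubble, so the constant of the fixed simplex works for all of them.
-/

open MeasureTheory MvPolynomial Set

noncomputable section

section FiniteDimensional

variable {𝕜 V E F : Type*} [NontriviallyNormedField 𝕜] [CompleteSpace 𝕜]
  [AddCommGroup V] [Module 𝕜 V] [FiniteDimensional 𝕜 V]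
  [NormedAddCommGroup E] [NormedSpace 𝕜 E] [NormedAddCommGroup F] [NormedSpace 𝕜 F]

theorem LinearMap.exists_norm_le_mul_norm_of_ker_le (I : V →ₗ[𝕜] E) (J : V →ₗ[𝕜] F)
    (h : LinearMap.ker J ≤ LinearMap.ker I) : ∃ C, 0 < C ∧ ∀ v, ‖I v‖ ≤ C * ‖J v‖ := by
  let M : LinearMap.range J →ₗ[𝕜] E :=
    (LinearMap.ker J).liftQ I h ∘ₗ J.quotKerEquivRange.symm.toLinearMap
  obtain ⟨C, hC, hM⟩ := (LinearMap.toContinuousLinearMap M).bound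
  refine ⟨C, hC, fun v => ?_⟩
  have hIM : I v = M ⟨J v, LinearMap.mem_range_self J v⟩ := by
    simp [M, LinearMap.quotKerEquivRange_symm_apply_image]
  exact hIM ▸ hM _

end FiniteDimensional

theorem Real.inv_sqrt_mul_sqrt_mul_sqrt_le {A Y Z C : ℝ} (hC : 0 < C) (hA : 0 ≤ A)
    (hAZ : A ≤ C * Z) (hYZ : Y ≤ Z) : (√C)⁻¹ * √A * √Y ≤ Z := by
  have hZ : 0 ≤ Z := nonneg_of_mul_nonneg_right (hA.trans hAZ) hC
  calc (√C)⁻¹ * √A * √Y ≤ (√C)⁻¹ * (√C * √Z) * √Z := by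
        gcongr
        rw [← Real.sqrt_mul hC.le]
        exact Real.sqrt_le_sqrt hAZ
    _ = Z := by
        rw [inv_mul_cancel_left₀ (by positivity), Real.mul_self_sqrt hZ]

section Lp

variable {𝕜 α V E : Type*} [NormedField 𝕜] [MeasurableSpace α] {μ : Measure α}
  [AddCommGroup V] [Module 𝕜 V] {p : ENNReal}

namespace LinearMap

variable [NormedAddCommGroup E] [NormedSpace 𝕜 E]

def toLp (f : V →ₗ[𝕜] α → E) (hf : ∀ v, MemLp (f v) p μ) : V →ₗ[𝕜] Lp E p μ where
  toFun v := (hf v).toLp (f v)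
  map_add' v w := by simp only [map_add]; exact MemLp.toLp_add _ _
  map_smul' c v := by simp only [map_smul]; exact MemLp.toLp_const_smul _ _

theorem toLp_apply (f : V →ₗ[𝕜] α → E) (hf : ∀ v, MemLp (f v) p μ) (v : V) :
    f.toLp hf v = (hf v).toLp (f v) := rfl

theorem toLp_eq_zero_iff (f : V →ₗ[𝕜] α → E) (hf : ∀ v, MemLp (f v) p μ) (v : V) :
    f.toLp hf v = 0 ↔ f v =ᵐ[μ] 0 := by
  rw [toLp_apply, Lp.eq_zero_iff_ae_eq_zero]
  exact ⟨(hf v).coeFn_toLp.symm.trans, (hf v).coeFn_toLp.trans⟩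

end LinearMap

theorem MemLp.norm_toLp_sq [NormedAddCommGroup E] [InnerProductSpace ℝ E] {f : α → E}
    (hf : MemLp f 2 μ) : ‖hf.toLp f‖ ^ 2 = ∫ x, ‖f x‖ ^ 2 ∂μ := by
  rw [← real_inner_self_eq_norm_sq, L2.inner_def]
  refine integral_congr_ae ?_
  filter_upwards [hf.coeFn_toLp] with x hx
  rw [hx, real_inner_self_eq_norm_sq]

end Lp

theorem ContinuousOn.memLp_restrict_of_isCompact {X E : Type*} [TopologicalSpace X] [T2Space X]
    [MeasurableSpace X] [OpensMeasurableSpace X] [NormedAddCommGroup E] {μ : Measure X}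
    [IsFiniteMeasureOnCompacts μ] {K : Set X} (hK : IsCompact K) {f : X → E}
    (hf : ContinuousOn f K) (p : ENNReal) : MemLp f p (μ.restrict K) := by
  have : IsFiniteMeasure (μ.restrict K) := isFiniteMeasure_restrict.mpr hK.measure_lt_top.ne
  have hKm := hK.isClosed.measurableSet
  obtain ⟨C, hC⟩ := hK.exists_bound_of_continuousOn hf
  exact .of_bound (hf.aestronglyMeasurable_of_isCompact hK hKm) C (ae_restrict_of_forall_mem hKm hC)

theorem AffineMap.setIntegral_image {E F : Type*} [NormedAddCommGroup E] [NormedSpace ℝ E]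
    [FiniteDimensional ℝ E] [MeasurableSpace E] [BorelSpace E] [NormedAddCommGroup F]
    [NormedSpace ℝ F] (μ : Measure E) [μ.IsAddHaarMeasure] (T : E →ᵃ[ℝ] E)
    (hT : Function.Injective T) {s : Set E} (hs : MeasurableSet s) (g : E → F) :
    ∫ x in T '' s, g x ∂μ = |LinearMap.det T.linear| • ∫ y in s, g (T y) ∂μ := by
  have hderiv (x : E) : HasFDerivAt T (LinearMap.toContinuousLinearMap T.linear) x := by
    rw [T.decomp]
    exact (LinearMap.toContinuousLinearMap T.linear).hasFDerivAt.add_const (T 0)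
  rw [integral_image_eq_integral_abs_det_fderiv_smul μ hs (fun x _ => (hderiv x).hasFDerivWithinAt)
    hT.injOn, integral_smul]
  rfl

namespace MvPolynomial

variable {σ τ R : Type*} [CommSemiring R]

theorem totalDegree_bind₁_le_mul (g : σ → MvPolynomial τ R) {n : ℕ}
    (hg : ∀ i, (g i).totalDegree ≤ n) (φ : MvPolynomial σ R) :
    (bind₁ g φ).totalDegree ≤ φ.totalDegree * n := by
  conv_lhs => rw [φ.as_sum]
  rw [map_sum]
  refine (totalDegree_finsetSum _ _).trans (Finset.sup_le fun m hm => ?_)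
  rw [bind₁_monomial]
  refine (totalDegree_mul _ _).trans ?_
  rw [totalDegree_C, zero_add]
  refine (totalDegree_finsetProd _ _).trans ?_
  calc ∑ i ∈ m.support, ((g i) ^ m i).totalDegree
      ≤ ∑ i ∈ m.support, m i * n :=
        Finset.sum_le_sum fun i _ => (totalDegree_pow _ _).trans (Nat.mul_le_mul_left _ (hg i))
    _ = m.degree * n := by rw [Finsupp.degree_apply, Finset.sum_mul]
    _ ≤ φ.totalDegree * n := Nat.mul_le_mul_right _ (le_totalDegree hm)

end MvPolynomial

namespace AffineBasis

section AffineMapTo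

variable {ι k V P W Q : Type*} [Fintype ι] [Ring k] [AddCommGroup V] [Module k V]
  [AddTorsor V P] [AddCommGroup W] [Module k W] [AddTorsor W Q]
  (b : AffineBasis ι k P) (b' : AffineBasis ι k Q)

def affineMapTo : P →ᵃ[k] Q :=
  (Finset.univ.affineCombination k b').comp b.coords

theorem coord_affineMapTo (i : ι) (x : P) : b'.coord i (b.affineMapTo b' x) = b.coord i x := by
  classical
  exact b'.coord_apply_combination_of_mem (Finset.mem_univ i) (b.sum_coord_apply_eq_one x)

theorem affineMapTo_apply_self (i : ι) : b.affineMapTo b' (b i) = b' i :=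
  b'.ext_elem fun j => by classical rw [coord_affineMapTo, b.coord_apply, b'.coord_apply]

theorem affineMapTo_injective : Function.Injective (b.affineMapTo b') := fun x y h =>
  b.ext_elem fun i => by rw [← coord_affineMapTo b b', h, coord_affineMapTo]

end AffineMapTo

section Bubble

variable {ι E F : Type*} [Fintype ι] [NormedAddCommGroup E] [NormedSpace ℝ E]
  [NormedAddCommGroup F] [NormedSpace ℝ F] (b : AffineBasis ι ℝ E)

theorem image_convexHull_affineMapTo (b' : AffineBasis ι ℝ F) :
    b.affineMapTo b' '' convexHull ℝ (range b) = convexHull ℝ (range b') := by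
  rw [AffineMap.image_convexHull (b.affineMapTo b'), ← range_comp]
  congr 2
  exact funext (b.affineMapTo_apply_self b')

theorem isCompact_convexHull : IsCompact (convexHull ℝ (range b)) :=
  (finite_range b).isCompact_convexHull ℝ

def bubble (x : E) : ℝ := ∏ i, b.coord i x

theorem bubble_affineMapTo (b' : AffineBasis ι ℝ F) (x : E) :
    b'.bubble (b.affineMapTo b' x) = b.bubble x := by
  simp only [bubble, coord_affineMapTo]

theorem continuous_bubble [FiniteDimensional ℝ E] : Continuous b.bubble :=
  continuous_finsetProd _ fun i _ => (b.coord i).continuous_of_finiteDimensional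

variable {b} {x : E}

theorem bubble_nonneg (hx : x ∈ convexHull ℝ (range b)) : 0 ≤ b.bubble x := by
  rw [convexHull_eq_nonneg_coord] at hx
  exact Finset.prod_nonneg fun i _ => hx i

theorem bubble_le_one (hx : x ∈ convexHull ℝ (range b)) : b.bubble x ≤ 1 := by
  rw [convexHull_eq_nonneg_coord] at hx
  refine Finset.prod_le_one (fun i _ => hx i) fun i _ => ?_
  rw [← b.sum_coord_apply_eq_one x]
  exact Finset.single_le_sum (fun j _ => hx j) (Finset.mem_univ i)

theorem bubble_pos (hx : x ∈ interior (convexHull ℝ (range b))) : 0 < b.bubble x := by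
  rw [interior_convexHull] at hx
  exact Finset.prod_pos fun i _ => hx i

theorem bubble_eq_zero_of_mem_frontier (hx : x ∈ frontier (convexHull ℝ (range b))) :
    b.bubble x = 0 := by
  rw [b.isCompact_convexHull.isClosed.frontier_eq, interior_convexHull,
    convexHull_eq_nonneg_coord] at hx
  obtain ⟨hnonneg, hnot⟩ := hx
  simp only [mem_ofPred_eq, not_forall, not_lt] at hnot
  obtain ⟨i, hi⟩ := hnot
  exact Finset.prod_eq_zero (Finset.mem_univ i) (le_antisymm hi (hnonneg i))

variable (b) in
theorem ae_restrict_bubble_pos [FiniteDimensional ℝ E] [MeasurableSpace E] [BorelSpace E]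
    (μ : Measure E) [μ.IsAddHaarMeasure] :
    ∀ᵐ x ∂μ.restrict (convexHull ℝ (range b)), 0 < b.bubble x := by
  have hfrontier : ∀ᵐ x ∂μ, x ∉ frontier (convexHull ℝ (range b)) :=
    measure_eq_zero_iff_ae_notMem.mp ((convex_convexHull ℝ _).addHaar_frontier μ)
  filter_upwards [ae_restrict_of_ae hfrontier,
    ae_restrict_mem b.isCompact_convexHull.isClosed.measurableSet] with x hx hmem
  rw [frontier, b.isCompact_convexHull.isClosed.closure_eq] at hx
  exact bubble_pos (by_contra fun h => hx ⟨hmem, h⟩)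

end Bubble

end AffineBasis

section EuclideanPolynomial

variable {d : ℕ}

def complexCoords (x : EuclideanSpace ℝ (Fin d)) : Fin d → ℂ := fun i => x i

theorem continuous_eval_complexCoords (φ : MvPolynomial (Fin d) ℂ) :
    Continuous fun x => eval (complexCoords x) φ :=
  (continuous_eval φ).comp <| continuous_pi fun i =>
    Complex.continuous_ofReal.comp (EuclideanSpace.proj (𝕜 := ℝ) i).continuous

def affinePoly (a : EuclideanSpace ℝ (Fin d) →ᵃ[ℝ] ℝ) : MvPolynomial (Fin d) ℂ :=
  C (a 0 : ℂ) + ∑ i, C (a.linear (EuclideanSpace.single i 1) : ℂ) * X i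

theorem eval_affinePoly (a : EuclideanSpace ℝ (Fin d) →ᵃ[ℝ] ℝ) (x : EuclideanSpace ℝ (Fin d)) :
    eval (complexCoords x) (affinePoly a) = a x := by
  have hlin : a.linear x = ∑ i, x i * a.linear (EuclideanSpace.single i 1) := by
    conv_lhs => rw [← (EuclideanSpace.basisFun (Fin d) ℝ).sum_repr x]
    simp
  rw [a.decomp, Pi.add_apply, hlin]
  simp [affinePoly, complexCoords, add_comm, mul_comm]

theorem totalDegree_affinePoly_le (a : EuclideanSpace ℝ (Fin d) →ᵃ[ℝ] ℝ) :
    (affinePoly a).totalDegree ≤ 1 := by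
  refine (totalDegree_add _ _).trans (max_le (by simp) ?_)
  refine (totalDegree_finsetSum _ _).trans (Finset.sup_le fun i _ => ?_)
  exact (totalDegree_mul _ _).trans (by simp [totalDegree_X])

def compAffine (φ : MvPolynomial (Fin d) ℂ)
    (T : EuclideanSpace ℝ (Fin d) →ᵃ[ℝ] EuclideanSpace ℝ (Fin d)) : MvPolynomial (Fin d) ℂ :=
  bind₁ (fun i => affinePoly ((EuclideanSpace.projₗ i).toAffineMap.comp T)) φ

theorem eval_compAffine (φ : MvPolynomial (Fin d) ℂ)
    (T : EuclideanSpace ℝ (Fin d) →ᵃ[ℝ] EuclideanSpace ℝ (Fin d)) (y : EuclideanSpace ℝ (Fin d)) :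
    eval (complexCoords y) (compAffine φ T) = eval (complexCoords (T y)) φ := by
  simp only [compAffine, eval, eval₂Hom_bind₁]
  congr 2
  funext i
  exact eval_affinePoly _ y

theorem totalDegree_compAffine_le (φ : MvPolynomial (Fin d) ℂ)
    (T : EuclideanSpace ℝ (Fin d) →ᵃ[ℝ] EuclideanSpace ℝ (Fin d)) :
    (compAffine φ T).totalDegree ≤ φ.totalDegree :=
  (totalDegree_bind₁_le_mul _ (fun _ => totalDegree_affinePoly_le _) φ).trans_eq (mul_one _)

namespace AffineBasis

variable (b : AffineBasis (Fin (d + 1)) ℝ (EuclideanSpace ℝ (Fin d)))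

def bubblePoly : MvPolynomial (Fin d) ℂ := ∏ i, affinePoly (b.coord i)

theorem eval_bubblePoly (x : EuclideanSpace ℝ (Fin d)) :
    eval (complexCoords x) b.bubblePoly = b.bubble x := by
  simp [bubblePoly, bubble, eval_affinePoly]

theorem totalDegree_bubblePoly_le : b.bubblePoly.totalDegree ≤ d + 1 :=
  (totalDegree_finsetProd _ _).trans <|
    (Finset.sum_le_sum fun i _ => totalDegree_affinePoly_le _).trans (by simp)

theorem bubblePoly_ne_zero : b.bubblePoly ≠ 0 := by
  intro h
  have hcentroid := b.eval_bubblePoly (Finset.univ.centroid ℝ b)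
  rw [h, map_zero, eq_comm, Complex.ofReal_eq_zero, bubble,
    Finset.prod_eq_zero_iff] at hcentroid
  obtain ⟨i, _, hi⟩ := hcentroid
  rw [b.coord_apply_centroid (Finset.mem_univ i), Finset.card_univ, Fintype.card_fin, inv_eq_zero,
    Nat.cast_eq_zero] at hi
  exact Nat.succ_ne_zero d hi

end AffineBasis

end EuclideanPolynomial

section L2

variable {d : ℕ}

namespace AffineBasis

variable (b : AffineBasis (Fin (d + 1)) ℝ (EuclideanSpace ℝ (Fin d)))

def BubbleBoundsL2 (p : ℕ) (C : ℝ) : Prop :=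
  ∀ φ : MvPolynomial (Fin d) ℂ, φ.totalDegree ≤ p →
    ∫ x in convexHull ℝ (range b), ‖eval (complexCoords x) φ‖ ^ 2 ≤
      C * ∫ x in convexHull ℝ (range b), b.bubble x * ‖eval (complexCoords x) φ‖ ^ 2

/-- The maps `φ ↦ φ` and `φ ↦ √b_K φ` from `P_p` to `L²(K)` have the same kernel because
`b_K > 0` a.e. on `K`, so they are comparable on the finite-dimensional `P_p`. -/
theorem exists_bubbleBoundsL2 (p : ℕ) : ∃ C, 0 < C ∧ b.BubbleBoundsL2 p C := by
  have hK := b.isCompact_convexHull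
  let evalₗ : restrictTotalDegree (Fin d) ℂ p →ₗ[ℂ] EuclideanSpace ℝ (Fin d) → ℂ :=
    LinearMap.pi (fun x => (aeval (complexCoords x)).toLinearMap) ∘ₗ
      (restrictTotalDegree (Fin d) ℂ p).subtype
  let w : EuclideanSpace ℝ (Fin d) → ℂ := fun x => (√(b.bubble x) : ℂ)
  have hw : Continuous w := Complex.continuous_ofReal.comp b.continuous_bubble.sqrt
  have hI (φ) : MemLp (evalₗ φ) 2 (volume.restrict (convexHull ℝ (range b))) :=
    (continuous_eval_complexCoords φ.1).continuousOn.memLp_restrict_of_isCompact hK 2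
  have hJ (φ) : MemLp (LinearMap.mulLeft ℂ w (evalₗ φ)) 2
      (volume.restrict (convexHull ℝ (range b))) :=
    (hw.mul (continuous_eval_complexCoords φ.1)).continuousOn.memLp_restrict_of_isCompact hK 2
  have hker : LinearMap.ker ((LinearMap.mulLeft ℂ w ∘ₗ evalₗ).toLp hJ) ≤
      LinearMap.ker (evalₗ.toLp hI) := by
    intro φ hφ
    rw [LinearMap.mem_ker, LinearMap.toLp_eq_zero_iff] at hφ ⊢
    filter_upwards [hφ, b.ae_restrict_bubble_pos volume] with x hx hpos
    have hwx : w x ≠ 0 := by simpa [w] using (Real.sqrt_pos.mpr hpos).ne'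
    exact (mul_eq_zero.mp hx).resolve_left hwx
  obtain ⟨C, hC, hIJ⟩ := LinearMap.exists_norm_le_mul_norm_of_ker_le _ _ hker
  refine ⟨C ^ 2, by positivity, fun φ hφ => ?_⟩
  let φp : restrictTotalDegree (Fin d) ℂ p := ⟨φ, (mem_restrictTotalDegree _ _ _).mpr hφ⟩
  have hIφ : ‖evalₗ.toLp hI φp‖ ^ 2 =
      ∫ x in convexHull ℝ (range b), ‖eval (complexCoords x) φ‖ ^ 2 :=
    MemLp.norm_toLp_sq (hI φp)
  have hJφ : ‖(LinearMap.mulLeft ℂ w ∘ₗ evalₗ).toLp hJ φp‖ ^ 2 =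
      ∫ x in convexHull ℝ (range b), b.bubble x * ‖eval (complexCoords x) φ‖ ^ 2 := by
    refine (MemLp.norm_toLp_sq (hJ φp)).trans
      (setIntegral_congr_fun hK.isClosed.measurableSet fun x hx => ?_)
    simp [w, evalₗ, φp, mul_pow, Real.sq_sqrt (bubble_nonneg hx)]
  rw [← hIφ, ← hJφ, ← mul_pow]
  exact pow_le_pow_left₀ (norm_nonneg _) (hIJ φp) 2

theorem BubbleBoundsL2.of_affineBasis
    {b₀ : AffineBasis (Fin (d + 1)) ℝ (EuclideanSpace ℝ (Fin d))} {p : ℕ} {C : ℝ}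
    (h : b₀.BubbleBoundsL2 p C) : b.BubbleBoundsL2 p C := by
  intro φ hφ
  have hcov (g : EuclideanSpace ℝ (Fin d) → ℝ) : ∫ x in convexHull ℝ (range b), g x =
      |LinearMap.det (b₀.affineMapTo b).linear| *
        ∫ y in convexHull ℝ (range b₀), g (b₀.affineMapTo b y) := by
    rw [← b₀.image_convexHull_affineMapTo b, (b₀.affineMapTo b).setIntegral_image volume
      (b₀.affineMapTo_injective b) b₀.isCompact_convexHull.isClosed.measurableSet, smul_eq_mul]
  rw [hcov, hcov, mul_left_comm]
  simp only [bubble_affineMapTo, ← eval_compAffine]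
  exact mul_le_mul_of_nonneg_left (h _ ((totalDegree_compAffine_le φ _).trans hφ)) (abs_nonneg _)

theorem integral_eval_mul_conj_eval_bubblePoly_mul (φ : MvPolynomial (Fin d) ℂ) :
    ∫ x in convexHull ℝ (range b),
        eval (complexCoords x) φ * starRingEnd ℂ (eval (complexCoords x) (b.bubblePoly * φ)) =
      ((∫ x in convexHull ℝ (range b), b.bubble x * ‖eval (complexCoords x) φ‖ ^ 2 : ℝ) : ℂ) := by
  rw [← integral_complex_ofReal]
  congr 1
  funext x
  rw [eval_mul, eval_bubblePoly, map_mul, Complex.conj_ofReal, mul_left_comm, Complex.mul_conj,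
    Complex.normSq_eq_norm_sq, Complex.ofReal_mul]

theorem integral_norm_sq_eval_bubblePoly_mul_le (φ : MvPolynomial (Fin d) ℂ) :
    ∫ x in convexHull ℝ (range b), ‖eval (complexCoords x) (b.bubblePoly * φ)‖ ^ 2 ≤
      ∫ x in convexHull ℝ (range b), b.bubble x * ‖eval (complexCoords x) φ‖ ^ 2 := by
  have hK := b.isCompact_convexHull
  have hφ := continuous_eval_complexCoords φ
  refine setIntegral_mono_on ?_ ?_ hK.isClosed.measurableSet fun x hx => ?_
  · exact ((continuous_eval_complexCoords _).norm.pow 2).continuousOn.integrableOn_compact hK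
  · exact (b.continuous_bubble.mul (hφ.norm.pow 2)).continuousOn.integrableOn_compact hK
  rw [eval_mul, eval_bubblePoly, norm_mul, Complex.norm_real, Real.norm_of_nonneg
    (bubble_nonneg hx), mul_pow]
  exact mul_le_mul_of_nonneg_right (sq_le (bubble_nonneg hx) (bubble_le_one hx)) (sq_nonneg _)

end AffineBasis

theorem exists_forall_bubbleBoundsL2 (d p : ℕ) : ∃ C, 0 < C ∧
    ∀ b : AffineBasis (Fin (d + 1)) ℝ (EuclideanSpace ℝ (Fin d)), b.BubbleBoundsL2 p C := by
  rcases isEmpty_or_nonempty (AffineBasis (Fin (d + 1)) ℝ (EuclideanSpace ℝ (Fin d))) with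
    _ | ⟨⟨b₀⟩⟩
  · exact ⟨1, one_pos, fun b => isEmptyElim b⟩
  obtain ⟨C, hC, h⟩ := b₀.exists_bubbleBoundsL2 p
  exact ⟨C, hC, fun b => h.of_affineBasis b⟩

end L2

end

/-- the local inf-sup estimate (8.1) of the paper. For a nondegenerate
`d`-simplex `K ⊂ ℝ^d` (given by an affine basis `b`, `K = conv(range b)`) there is a
constant `c = c_{p,d} > 0` independent of `K` such that for every `0 ≠ φ ∈ P_p(K)` there
is `0 ≠ η ∈ P_{p+d+1}(K) ∩ H¹₀(K)` (a polynomial of degree `≤ p+d+1` vanishing on `∂K`)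
with `Re⟨φ,η⟩_{L₂(K)} ≥ c ‖φ‖_{L₂(K)} ‖η‖_{L₂(K)}`; i.e. the inf over `φ` of the sup
over `η` of the normalized pairing is `≥ c`. -/
theorem simplex_infsup_bubble (d p : ℕ) :
    ∃ c : ℝ, 0 < c ∧
      ∀ b : AffineBasis (Fin (d + 1)) ℝ (EuclideanSpace ℝ (Fin d)),
        ∀ φ : MvPolynomial (Fin d) ℂ, φ.totalDegree ≤ p → φ ≠ 0 →
          ∃ η : MvPolynomial (Fin d) ℂ,
            η.totalDegree ≤ p + d + 1 ∧ η ≠ 0 ∧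
            (∀ x ∈ frontier (convexHull ℝ (Set.range ⇑b)),
              MvPolynomial.eval (fun i => ((x i : ℝ) : ℂ)) η = 0) ∧
            c * Real.sqrt (∫ x in convexHull ℝ (Set.range ⇑b),
                  ‖MvPolynomial.eval (fun i => ((x i : ℝ) : ℂ)) φ‖ ^ 2)
              * Real.sqrt (∫ x in convexHull ℝ (Set.range ⇑b),
                  ‖MvPolynomial.eval (fun i => ((x i : ℝ) : ℂ)) η‖ ^ 2)
            ≤ (∫ x in convexHull ℝ (Set.range ⇑b),
                MvPolynomial.eval (fun i => ((x i : ℝ) : ℂ)) φ *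
                  (starRingEnd ℂ) (MvPolynomial.eval (fun i => ((x i : ℝ) : ℂ)) η)).re := by
  obtain ⟨C, hC, hbound⟩ := exists_forall_bubbleBoundsL2 d p
  refine ⟨(√C)⁻¹, by positivity, fun b φ hφ hφ0 =>
    ⟨b.bubblePoly * φ, ?_, mul_ne_zero b.bubblePoly_ne_zero hφ0, fun x hx => ?_, ?_⟩⟩
  · have := b.totalDegree_bubblePoly_le
    exact (totalDegree_mul _ _).trans (by omega)
  · change eval (complexCoords x) (b.bubblePoly * φ) = 0
    rw [eval_mul, b.eval_bubblePoly, AffineBasis.bubble_eq_zero_of_mem_frontier hx,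
      Complex.ofReal_zero, zero_mul]
  · calc _ ≤ ∫ x in convexHull ℝ (range b), b.bubble x * ‖eval (complexCoords x) φ‖ ^ 2 :=
          Real.inv_sqrt_mul_sqrt_mul_sqrt_le hC (integral_nonneg fun _ => by positivity)
            (hbound b φ hφ) (b.integral_norm_sq_eval_bubblePoly_mul_le φ)
      _ = _ := congrArg Complex.re (b.integral_eval_mul_conj_eval_bubblePoly_mul φ).symm
end
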